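/- Convergence of SGDM with decreasing Demon-style momentum (Theorem 1): Let f be convex, continuously differentiable with L-Lipschitz gradient, minimized at θ* with f* = f(θ*). Let β_t = (1/t)·(t+1)/(t+2), α ∈ (0, 2/(3L)), and θ_{t+1} = θ_t - α·∇f(θ_t) + β_t·(θ_t - θ_{t-1}) for t ≥ 1 with θ_0 = θ_1. Then the Cesàro average θ̄_T = (1/T)·∑_{t=1}^T θ_t satisfies f(θ̄_T) - f* ≤ (‖θ_1 - θ*‖²/T)·(3L/4 + 1/(2α)). -/

import Mathlib

/-!
Write `y_t = θ_t + (θ_t - θ_{t-1}) / t`. The Demon momentum `β_t` is exactly the one for which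
`y` moves by plain gradient steps, `y_{t+1} = y_t - a_t ∇f(θ_t)` with `a_t = α (t+2)/(t+1)`, while
`θ_{t+1}` is a convex combination of `θ_t` and `y_{t+1}`. Convexity and `L`-smoothness give
`f θ - f⋆ + ‖∇f θ‖² / (2L) ≤ ⟪∇f θ, θ - θ⋆⟫`, so the usual expansion of `‖y_{t+1} - θ⋆‖²` shows
that `Φ_t = ‖y_t - θ⋆‖² + (2 a_t / t) (f θ_{t-1} - f⋆)` decreases by at least `2α (f θ_t - f⋆)`
as long as `a_t ≤ 3α/2 ≤ 1/L`. Telescoping bounds `∑ (f θ_t - f⋆)` by `Φ_1 / (2α)`, and Jensen's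
inequality passes to the average iterate.
-/

open RealInnerProductSpace Set

section Smooth

variable {E : Type*} [NormedAddCommGroup E] [InnerProductSpace ℝ E] [CompleteSpace E] {f : E → ℝ}

lemma DifferentiableAt.hasDerivAt_comp_lineMap {x y : E} {s : ℝ}
    (hf : DifferentiableAt ℝ f (AffineMap.lineMap x y s)) :
    HasDerivAt (fun r : ℝ => f (AffineMap.lineMap x y r))
      ⟪gradient f (AffineMap.lineMap x y s), y - x⟫ s := by
  simpa only [Function.comp_def, InnerProductSpace.toDual_apply_apply] using
    hf.hasGradientAt.hasFDerivAt.comp_hasDerivAt s AffineMap.hasDerivAt_lineMap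

lemma IsLocalMin.gradient_eq_zero {x : E} (h : IsLocalMin f x) : gradient f x = 0 := by
  rw [gradient, h.fderiv_eq_zero, map_zero]

theorem ConvexOn.add_inner_gradient_le (hf : ConvexOn ℝ univ f) {x : E}
    (hd : DifferentiableAt ℝ f x) (y : E) : f x + ⟪gradient f x, y - x⟫ ≤ f y := by
  have hline : ConvexOn ℝ univ fun r : ℝ => f (AffineMap.lineMap x y r) :=
    hf.comp_affineMap (AffineMap.lineMap x y)
  have := hline.le_slope_of_hasDerivAt (mem_univ 0) (mem_univ 1) zero_lt_one
    (DifferentiableAt.hasDerivAt_comp_lineMap (by simpa using hd))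
  simp only [slope_def_field, AffineMap.lineMap_apply_zero, AffineMap.lineMap_apply_one,
    sub_zero, div_one] at this
  linarith

theorem le_add_inner_gradient_add_sq {L : ℝ} (hd : Differentiable ℝ f)
    (hlip : ∀ x y, ‖gradient f x - gradient f y‖ ≤ L * ‖x - y‖) (x y : E) :
    f y ≤ f x + ⟪gradient f x, y - x⟫ + L / 2 * ‖y - x‖ ^ 2 := by
  set φ : ℝ → ℝ := fun s =>
    f (AffineMap.lineMap x y s) - s * ⟪gradient f x, y - x⟫ - L / 2 * s ^ 2 * ‖y - x‖ ^ 2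
  have hφ (s : ℝ) : HasDerivAt φ
      (⟪gradient f (AffineMap.lineMap x y s) - gradient f x, y - x⟫ - L * s * ‖y - x‖ ^ 2) s := by
    refine (((hd (AffineMap.lineMap x y s)).hasDerivAt_comp_lineMap.sub
      ((hasDerivAt_id s).mul_const ⟪gradient f x, y - x⟫)).sub
      (((hasDerivAt_pow 2 s).const_mul (L / 2)).mul_const (‖y - x‖ ^ 2))).congr_deriv ?_
    rw [inner_sub_left]
    ring
  have hφ_nonpos (s : ℝ) (hs : s ∈ interior (Icc (0 : ℝ) 1)) :
      ⟪gradient f (AffineMap.lineMap x y s) - gradient f x, y - x⟫ - L * s * ‖y - x‖ ^ 2 ≤ 0 := by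
    rw [interior_Icc] at hs
    have hdist : ‖AffineMap.lineMap x y s - x‖ = s * ‖y - x‖ := by
      rw [AffineMap.lineMap_apply_module', add_sub_cancel_right, norm_smul,
        Real.norm_of_nonneg hs.1.le]
    have := (real_inner_le_norm _ _).trans
      (mul_le_mul_of_nonneg_right (hlip (AffineMap.lineMap x y s) x) (norm_nonneg (y - x)))
    rw [hdist] at this
    linarith
  have hanti : AntitoneOn φ (Icc 0 1) :=
    antitoneOn_of_hasDerivWithinAt_nonpos (convex_Icc 0 1)
      (fun s _ => (hφ s).continuousAt.continuousWithinAt)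
      (fun s _ => (hφ s).hasDerivWithinAt) hφ_nonpos
  have := hanti (left_mem_Icc.2 zero_le_one) (right_mem_Icc.2 zero_le_one) zero_le_one
  simp only [φ, AffineMap.lineMap_apply_zero, AffineMap.lineMap_apply_one] at this
  linarith

theorem sub_add_norm_gradient_sq_div_le_inner {L : ℝ} (hL : 0 < L) (hf : ConvexOn ℝ univ f)
    (hd : Differentiable ℝ f) (hlip : ∀ x y, ‖gradient f x - gradient f y‖ ≤ L * ‖x - y‖)
    {xstar : E} (hcrit : gradient f xstar = 0) (x : E) :
    f x - f xstar + ‖gradient f x‖ ^ 2 / (2 * L) ≤ ⟪gradient f x, x - xstar⟫ := by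
  set g := gradient f x
  -- compare both sides at the point `xstar + g / L`
  have hsmooth := le_add_inner_gradient_add_sq hd hlip xstar (xstar + L⁻¹ • g)
  have hconv := hf.add_inner_gradient_le (hd x) (xstar + L⁻¹ • g)
  rw [hcrit, inner_zero_left, add_sub_cancel_left, norm_smul, Real.norm_of_nonneg (by positivity)]
    at hsmooth
  have hsplit : ⟪g, xstar + L⁻¹ • g - x⟫ = L⁻¹ * ‖g‖ ^ 2 - ⟪g, x - xstar⟫ := by
    rw [show xstar + L⁻¹ • g - x = L⁻¹ • g - (x - xstar) by abel, inner_sub_right,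
      real_inner_smul_right, real_inner_self_eq_norm_sq]
  have hL' : L / 2 * (L⁻¹ * ‖g‖) ^ 2 = L⁻¹ * ‖g‖ ^ 2 - ‖g‖ ^ 2 / (2 * L) := by
    field_simp; ring
  linarith

theorem norm_sub_smul_gradient_sub_sq_le {L : ℝ} (hL : 0 < L) (hf : ConvexOn ℝ univ f)
    (hd : Differentiable ℝ f) (hlip : ∀ x y, ‖gradient f x - gradient f y‖ ≤ L * ‖x - y‖)
    {xstar : E} (hcrit : gradient f xstar = 0) {a c : ℝ} (ha : 0 ≤ a) (haL : a ≤ L⁻¹)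
    (hc : 0 ≤ c) (x x' : E) :
    ‖x + c • (x - x') - a • gradient f x - xstar‖ ^ 2 ≤
      ‖x + c • (x - x') - xstar‖ ^ 2 - 2 * a * (f x - f xstar) - 2 * a * c * (f x - f x') := by
  set g := gradient f x
  have hexpand : ‖x + c • (x - x') - a • g - xstar‖ ^ 2 = ‖x + c • (x - x') - xstar‖ ^ 2
      - 2 * a * (⟪g, x - xstar⟫ + c * ⟪g, x - x'⟫) + a ^ 2 * ‖g‖ ^ 2 := by
    rw [show x + c • (x - x') - a • g - xstar = (x + c • (x - x') - xstar) - a • g by abel,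
      norm_sub_sq_real, norm_smul, Real.norm_of_nonneg ha, real_inner_smul_right,
      real_inner_comm, show x + c • (x - x') - xstar = (x - xstar) + c • (x - x') by abel,
      inner_add_right, real_inner_smul_right]
    ring
  have hkey := sub_add_norm_gradient_sq_div_le_inner hL hf hd hlip hcrit x
  have hsecant : f x - f x' ≤ ⟪g, x - x'⟫ := by
    have := hf.add_inner_gradient_le (hd x) x'
    rw [← neg_sub, inner_neg_right] at this
    linarith
  have hsq : a ^ 2 * ‖g‖ ^ 2 ≤ 2 * a * (‖g‖ ^ 2 / (2 * L)) := by
    have : a ^ 2 ≤ a * L⁻¹ := by rw [sq]; exact mul_le_mul_of_nonneg_left haL ha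
    calc a ^ 2 * ‖g‖ ^ 2 ≤ a * L⁻¹ * ‖g‖ ^ 2 := by gcongr
      _ = 2 * a * (‖g‖ ^ 2 / (2 * L)) := by field_simp
  have hmomentum : 2 * a * c * (f x - f x') ≤ 2 * a * (c * ⟪g, x - x'⟫) := by
    rw [← mul_assoc]; gcongr
  linarith [mul_le_mul_of_nonneg_left hkey (by positivity : (0 : ℝ) ≤ 2 * a)]

end Smooth

theorem ConvexOn.map_inv_card_smul_sum_le {E ι : Type*} [AddCommGroup E] [Module ℝ E] {f : E → ℝ}
    (hf : ConvexOn ℝ univ f) {s : Finset ι} (hs : s.Nonempty) (x : ι → E) :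
    f ((s.card : ℝ)⁻¹ • ∑ i ∈ s, x i) ≤ (s.card : ℝ)⁻¹ * ∑ i ∈ s, f (x i) := by
  have hcard : (s.card : ℝ) ≠ 0 := Nat.cast_ne_zero.2 hs.card_pos.ne'
  rw [Finset.smul_sum, Finset.mul_sum]
  refine hf.map_sum_le (fun _ _ => by positivity) ?_ (fun _ _ => mem_univ _)
  rw [Finset.sum_const, nsmul_eq_mul, mul_inv_cancel₀ hcard]

lemma Finset.sum_Icc_le_sub_of_le_sub {F Φ : ℕ → ℝ} {m n : ℕ} (hmn : m ≤ n)
    (h : ∀ t ∈ Icc m n, F t ≤ Φ t - Φ (t + 1)) : ∑ t ∈ Icc m n, F t ≤ Φ m - Φ (n + 1) := by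
  have := Finset.sum_Icc_sub hmn (fun t => -Φ t)
  simp only [neg_sub_neg] at this
  exact (sum_le_sum h).trans_eq (by rw [this])

section Demon

variable {E : Type*} [AddCommGroup E] [Module ℝ E]

noncomputable def demonAnchor (θ : ℕ → E) (t : ℕ) : E :=
  θ t + (t : ℝ)⁻¹ • (θ t - θ (t - 1))

lemma demonAnchor_one {θ : ℕ → E} (h01 : θ 0 = θ 1) : demonAnchor θ 1 = θ 1 := by
  simp [demonAnchor, h01]

lemma demonAnchor_succ {θ : ℕ → E} {g : E} {α : ℝ} {t : ℕ}
    (hrec : θ (t + 1) = θ t - α • g +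
      ((1 / (t : ℝ)) * (((t : ℝ) + 1) / ((t : ℝ) + 2))) • (θ t - θ (t - 1))) :
    demonAnchor θ (t + 1) = demonAnchor θ t - (α * (t + 2) / (t + 1)) • g := by
  simp only [demonAnchor, Nat.add_sub_cancel, hrec]
  push_cast
  match_scalars <;> field_simp <;> ring

end Demon

section Lyapunov

variable {E : Type*} [NormedAddCommGroup E] [InnerProductSpace ℝ E] {f : E → ℝ}

noncomputable def demonLyapunov (f : E → ℝ) (α : ℝ) (xstar : E) (θ : ℕ → E) (t : ℕ) : ℝ :=
  ‖demonAnchor θ t - xstar‖ ^ 2 + 2 * α * (t + 2) / (t * (t + 1)) * (f (θ (t - 1)) - f xstar)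

lemma demonLyapunov_nonneg {xstar : E} (hmin : ∀ x, f xstar ≤ f x) {α : ℝ} (hα : 0 ≤ α)
    (θ : ℕ → E) (t : ℕ) : 0 ≤ demonLyapunov f α xstar θ t :=
  add_nonneg (by positivity) (mul_nonneg (by positivity) (sub_nonneg.2 (hmin _)))

variable [CompleteSpace E]

theorem demonLyapunov_one_le {L : ℝ} (hd : Differentiable ℝ f)
    (hlip : ∀ x y, ‖gradient f x - gradient f y‖ ≤ L * ‖x - y‖) {xstar : E}
    (hcrit : gradient f xstar = 0) {α : ℝ} (hα : 0 ≤ α) {θ : ℕ → E} (h01 : θ 0 = θ 1) :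
    demonLyapunov f α xstar θ 1 ≤ (1 + 3 * α * L / 2) * ‖θ 1 - xstar‖ ^ 2 := by
  have hsmooth := le_add_inner_gradient_add_sq hd hlip xstar (θ 1)
  rw [hcrit, inner_zero_left, add_zero] at hsmooth
  simp only [demonLyapunov, demonAnchor_one h01, Nat.sub_self, h01, Nat.cast_one]
  nlinarith [mul_le_mul_of_nonneg_left hsmooth hα]

theorem demonLyapunov_succ_le {L : ℝ} (hL : 0 < L) (hf : ConvexOn ℝ univ f)
    (hd : Differentiable ℝ f) (hlip : ∀ x y, ‖gradient f x - gradient f y‖ ≤ L * ‖x - y‖)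
    {xstar : E} (hmin : ∀ x, f xstar ≤ f x) {α : ℝ} (hα0 : 0 < α) (hα1 : α < 2 / (3 * L))
    {θ : ℕ → E} {t : ℕ} (ht : 1 ≤ t)
    (hrec : θ (t + 1) = θ t - α • gradient f (θ t) +
      ((1 / (t : ℝ)) * (((t : ℝ) + 1) / ((t : ℝ) + 2))) • (θ t - θ (t - 1))) :
    2 * α * (f (θ t) - f xstar) ≤
      demonLyapunov f α xstar θ t - demonLyapunov f α xstar θ (t + 1) := by
  have htR : (1 : ℝ) ≤ t := by exact_mod_cast ht
  set a := α * (t + 2) / (t + 1) with ha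
  have hαa : α ≤ a := by rw [ha, le_div_iff₀ (by positivity)]; nlinarith
  have haL : a ≤ L⁻¹ := by
    have ha32 : a ≤ 3 / 2 * α := by rw [ha, div_le_iff₀ (by positivity)]; nlinarith
    have hαL : 3 / 2 * α < L⁻¹ :=
      calc 3 / 2 * α < 3 / 2 * (2 / (3 * L)) := by gcongr
        _ = L⁻¹ := by field_simp
    linarith
  have hstep : ‖demonAnchor θ (t + 1) - xstar‖ ^ 2 ≤ ‖demonAnchor θ t - xstar‖ ^ 2
      - 2 * a * (f (θ t) - f xstar) - 2 * a * (t : ℝ)⁻¹ * (f (θ t) - f (θ (t - 1))) := by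
    rw [demonAnchor_succ hrec]
    exact norm_sub_smul_gradient_sub_sq_le hL hf hd hlip
      (IsLocalMin.gradient_eq_zero (.of_forall hmin)) (by positivity) haL (by positivity) _ _
  have hweight : 2 * α * (t + 2) / (t * (t + 1)) = 2 * a * (t : ℝ)⁻¹ := by
    rw [ha]; field_simp
  have hweight_anti : 2 * α * ((t : ℝ) + 1 + 2) / ((t + 1) * (t + 1 + 1)) ≤
      2 * α * (t + 2) / (t * (t + 1)) := by
    rw [div_le_div_iff₀ (by positivity) (by positivity)]
    nlinarith [mul_pos (mul_pos hα0 (by positivity : (0 : ℝ) < t + 1))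
      (by positivity : (0 : ℝ) < t + 4)]
  have hFt : 0 ≤ f (θ t) - f xstar := sub_nonneg.2 (hmin _)
  simp only [demonLyapunov, Nat.add_sub_cancel, Nat.cast_add, Nat.cast_one]
  rw [hweight] at hweight_anti ⊢
  linarith [mul_le_mul_of_nonneg_right hweight_anti hFt, mul_le_mul_of_nonneg_right hαa hFt]

end Lyapunov

/-- Theorem 1: Convergence of SGDM with decreasing Demon-style momentum
β_t = (1/t)·(t+1)/(t+2), constant step size α ∈ (0, 2/(3L)):
f(θ̄_T) - f* ≤ (‖θ_1 - θ*‖²/T)·(3L/4 + 1/(2α)). -/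
theorem demon_sgdm_convergence {p : ℕ}
    (f : EuclideanSpace ℝ (Fin p) → ℝ) (L : ℝ) (hL : 0 < L)
    (hconv : ConvexOn ℝ Set.univ f) (hcd : ContDiff ℝ 1 f)
    (hlip : ∀ x y, ‖gradient f x - gradient f y‖ ≤ L * ‖x - y‖)
    (θstar : EuclideanSpace ℝ (Fin p)) (hmin : ∀ x, f θstar ≤ f x)
    (α : ℝ) (hα0 : 0 < α) (hα1 : α < 2 / (3 * L))
    (θ : ℕ → EuclideanSpace ℝ (Fin p)) (h01 : θ 0 = θ 1)
    (hrec : ∀ t : ℕ, 1 ≤ t →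
      θ (t + 1) = θ t - α • gradient f (θ t) +
        ((1 / (t : ℝ)) * (((t : ℝ) + 1) / ((t : ℝ) + 2))) • (θ t - θ (t - 1)))
    (T : ℕ) (hT : 1 ≤ T) :
    f ((1 / (T : ℝ)) • ∑ t ∈ Finset.Icc 1 T, θ t) - f θstar ≤
      ‖θ 1 - θstar‖ ^ 2 / (T : ℝ) * (3 / 4 * L + 1 / (2 * α)) := by
  have hd : Differentiable ℝ f := hcd.differentiable one_ne_zero
  set Φ := demonLyapunov f α θstar θ
  have htelescope : 2 * α * ∑ t ∈ Finset.Icc 1 T, (f (θ t) - f θstar) ≤ Φ 1 - Φ (T + 1) := by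
    rw [Finset.mul_sum]
    exact Finset.sum_Icc_le_sub_of_le_sub hT fun t ht =>
      demonLyapunov_succ_le hL hconv hd hlip hmin hα0 hα1 (Finset.mem_Icc.1 ht).1
        (hrec t (Finset.mem_Icc.1 ht).1)
  have hΦ1 := demonLyapunov_one_le hd hlip (IsLocalMin.gradient_eq_zero (.of_forall hmin))
    hα0.le h01
  have hΦ_nonneg := demonLyapunov_nonneg hmin hα0.le θ (T + 1)
  have hsum : ∑ t ∈ Finset.Icc 1 T, (f (θ t) - f θstar) ≤
      ‖θ 1 - θstar‖ ^ 2 * (3 / 4 * L + 1 / (2 * α)) := by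
    rw [← mul_le_mul_iff_right₀ (by positivity : (0 : ℝ) < 2 * α)]
    calc _ ≤ (1 + 3 * α * L / 2) * ‖θ 1 - θstar‖ ^ 2 := by linarith
      _ = _ := by field_simp; ring
  have hjensen := (hconv.add_const (-f θstar)).map_inv_card_smul_sum_le
    (Finset.nonempty_Icc.2 hT) θ
  simp only [Pi.add_apply, ← sub_eq_add_neg, Nat.card_Icc, Nat.add_sub_cancel, ← one_div]
    at hjensen
  calc _ ≤ 1 / (T : ℝ) * ∑ t ∈ Finset.Icc 1 T, (f (θ t) - f θstar) := hjensen
    _ ≤ 1 / (T : ℝ) * (‖θ 1 - θstar‖ ^ 2 * (3 / 4 * L + 1 / (2 * α))) := by gcongr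
    _ = _ := by ring
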